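/- arXiv:2304.02091 — 3 statements merged into one kernel-verified Lean document; each statement's English description precedes it below -/
import Mathlib

section
/- Let P be a multivariate polynomial over a field F of characteristic 2 in variables y_1,...,y_n, and let T ⊆ [n]. Define Q to be the polynomial obtained from P by keeping exactly those monomials divisible by ∏_{i∈T} y_i (setting the coefficients of all other monomials to zero). Then Q = ∑_{I ⊆ T} P_{−I}, where P_{−I} denotes P with the variables y_i for i ∈ I substituted by 0. -/
/-!
The coefficient of `m` in `P_{-I}` is `P.coeff m` if `m` vanishes on `I` and `0` otherwise.
Hence the coefficient of `m` in `∑_{I ⊆ T} P_{-I}` is `P.coeff m` times the number of subsets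
of `T` on which `m` vanishes, i.e. `2 ^ #{i ∈ T | m i = 0}`. In characteristic 2 this count
survives only when it is `2 ^ 0`, that is when `m` is positive on all of `T`.
-/

open MvPolynomial Finset

namespace Finset

theorem sum_powerset_ite_forall {α M : Type*} [AddCommMonoid M] (T : Finset α) (p : α → Prop)
    [DecidablePred p] (c : M) :
    ∑ I ∈ T.powerset, (if ∀ i ∈ I, p i then c else 0) = 2 ^ #(T.filter p) • c := by
  have hfilter : {I ∈ T.powerset | ∀ i ∈ I, p i} = (T.filter p).powerset := by
    ext I
    simp only [mem_filter, mem_powerset, subset_iff]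
    exact ⟨fun h _ hi => ⟨h.1 hi, h.2 _ hi⟩, fun h => ⟨fun _ hi => (h hi).1, fun _ hi => (h hi).2⟩⟩
  rw [← sum_filter, hfilter, sum_const, card_powerset]

theorem sum_powerset_ite_forall_of_charP_two {α R : Type*} [Semiring R] [CharP R 2]
    (T : Finset α) (p : α → Prop) [DecidablePred p] (c : R) :
    ∑ I ∈ T.powerset, (if ∀ i ∈ I, p i then c else 0) = if ∀ i ∈ T, ¬ p i then c else 0 := by
  have hcard : #(T.filter p) = 0 ↔ ∀ i ∈ T, ¬ p i := by rw [card_eq_zero, filter_eq_empty_iff]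
  rw [sum_powerset_ite_forall]
  split_ifs with h
  · rw [hcard.mpr h, pow_zero, one_smul]
  · rw [← hcard] at h
    rw [nsmul_eq_mul, Nat.cast_pow, Nat.cast_ofNat, CharTwo.two_eq_zero, zero_pow h, zero_mul]

end Finset

namespace MvPolynomial

variable {σ R : Type*} [CommSemiring R] [DecidableEq σ]

theorem aeval_ite_mem_zero_X_monomial (I : Finset σ) (d : σ →₀ ℕ) (c : R) :
    aeval (fun i => if i ∈ I then 0 else (X i : MvPolynomial σ R)) (monomial d c) =
      if ∀ i ∈ I, d i = 0 then monomial d c else 0 := by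
  rw [aeval_monomial, algebraMap_eq, Finsupp.prod]
  split_ifs with h
  · rw [monomial_eq, Finsupp.prod]
    congr 1
    refine prod_congr rfl fun i hi => ?_
    rw [if_neg fun hiI => Finsupp.mem_support_iff.mp hi (h i hiI)]
  · push Not at h
    obtain ⟨i, hiI, hi⟩ := h
    rw [prod_eq_zero (Finsupp.mem_support_iff.mpr hi) (by simp [hiI, hi]), mul_zero]

theorem coeff_aeval_ite_mem_zero_X (I : Finset σ) (P : MvPolynomial σ R) (m : σ →₀ ℕ) :
    (aeval (fun i => if i ∈ I then 0 else (X i : MvPolynomial σ R)) P).coeff m =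
      if ∀ i ∈ I, m i = 0 then P.coeff m else 0 := by
  induction P using MvPolynomial.induction_on' with
  | monomial d c =>
    rw [aeval_ite_mem_zero_X_monomial, apply_ite (coeff m), coeff_zero, coeff_monomial]
    by_cases hdm : d = m
    · subst hdm; simp
    · simp [hdm]
  | add P₁ P₂ ih₁ ih₂ =>
    rw [map_add, coeff_add, coeff_add, ih₁, ih₂]
    split_ifs <;> simp

end MvPolynomial

theorem inclusion_exclusion_sieve_char_two
    {F : Type} [Field F] [CharP F 2] {n : ℕ}
    (P Q : MvPolynomial (Fin n) F) (T : Finset (Fin n))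
    (hQ : ∀ m : Fin n →₀ ℕ, Q.coeff m = if ∀ i ∈ T, 1 ≤ m i then P.coeff m else 0) :
    Q = ∑ I ∈ T.powerset,
        MvPolynomial.aeval (fun i => if i ∈ I then 0 else (X i : MvPolynomial (Fin n) F)) P := by
  ext m
  simp only [hQ, coeff_sum, coeff_aeval_ite_mem_zero_X, sum_powerset_ite_forall_of_charP_two,
    Nat.one_le_iff_ne_zero, ne_eq]
  congr -- the two sides differ only in their `Decidable` instances
end

section
/- Let H be a connected subgraph of an undirected graph G with vertex set U = V(H) and edge set F = E(H). Then every branching walk W = (T, φ) in G whose edge span equals F has size at least |F| + 1, and there exists such a branching walk of size exactly |F| + 1. -/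
/-!
A tree `T` has `|V(T)| - 1` edges and the edge span is their image, which gives the lower bound.
For the construction, grow a tree one leaf at a time, starting from a single vertex mapped into `H`.
While some edge of `H` is not yet covered, connectivity of `H` yields an uncovered edge of `H`
leaving the image of the current tree (a walk in `H` to an uncovered edge crosses the boundary of
that image); attaching a new leaf mapped across it enlarges the edge span by exactly one edge.
-/

namespace SimpleGraph

variable {α V : Type*} {G : SimpleGraph V} {T : SimpleGraph α}

def Hom.edgeSpan (φ : T →g G) : Set (Sym2 V) := Sym2.map φ '' T.edgeSet

lemma Hom.edgeSpan_subset_sym2_range (φ : T →g G) : φ.edgeSpan ⊆ (Set.range φ).sym2 := by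
  rintro _ ⟨e, -, rfl⟩
  induction e using Sym2.ind with
  | _ a b => simp

theorem IsTree.ncard_edgeSpan_add_one_le [Finite α] (hT : T.IsTree) (φ : T →g G) :
    φ.edgeSpan.ncard + 1 ≤ Nat.card α := by
  rw [← (isTree_iff_connected_and_card.mp hT).2, Nat.card_coe_set_eq]
  exact Nat.add_le_add_right (Set.ncard_image_le (Set.toFinite _)) 1

def addLeaf (T : SimpleGraph α) (v : α) : SimpleGraph (Option α) :=
  T.map (Function.Embedding.some : α ↪ Option α) ⊔ edge (some v) none

@[simp]
lemma addLeaf_adj_some {v a b : α} : (T.addLeaf v).Adj (some a) (some b) ↔ T.Adj a b := by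
  simpa [addLeaf, map_adj', edge_adj] using fun h : T.Adj a b => h.ne

@[simp]
lemma addLeaf_adj_some_none {v a : α} : (T.addLeaf v).Adj (some a) none ↔ a = v := by
  simp [addLeaf, map_adj', edge_adj]

lemma edgeSet_addLeaf (v : α) :
    (T.addLeaf v).edgeSet = insert s(some v, none) (Sym2.map some '' T.edgeSet) := by
  rw [addLeaf, edgeSet_sup, edgeSet_map, edgeSet_edge_of_ne (Option.some_ne_none v),
    Set.union_singleton]
  rfl

lemma Connected.addLeaf (hT : T.Connected) (v : α) : (T.addLeaf v).Connected := by
  refine (connected_iff_exists_forall_reachable _).mpr ⟨some v, fun o => ?_⟩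
  cases o with
  | none => exact (addLeaf_adj_some_none.mpr rfl).reachable
  | some a =>
    exact (hT.preconnected v a).map (⟨some, addLeaf_adj_some.mpr⟩ : T →g T.addLeaf v)

lemma IsTree.addLeaf [Finite α] (hT : T.IsTree) (v : α) : (T.addLeaf v).IsTree := by
  rw [isTree_iff_connected_and_card] at hT ⊢
  have hnew : s(some v, none) ∉ Sym2.map some '' T.edgeSet := by
    rintro ⟨e, -, he⟩
    induction e using Sym2.ind with
    | _ a b => simp at he
  refine ⟨hT.1.addLeaf v, ?_⟩
  rw [Nat.card_coe_set_eq, edgeSet_addLeaf, Set.ncard_insert_of_notMem hnew,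
    Set.ncard_image_of_injective _ (Sym2.map.injective (Option.some_injective α)),
    ← Nat.card_coe_set_eq, hT.2, Finite.card_option]

def Hom.addLeaf (φ : T →g G) {v : α} {y : V} (h : G.Adj (φ v) y) : T.addLeaf v →g G where
  toFun o := o.elim y φ
  map_rel' := by
    rintro (_ | a) (_ | b) hab
    · exact absurd hab (SimpleGraph.irrefl _)
    · exact (addLeaf_adj_some_none.mp hab.symm ▸ h).symm
    · exact addLeaf_adj_some_none.mp hab ▸ h
    · exact φ.map_adj (addLeaf_adj_some.mp hab)

lemma Hom.edgeSpan_addLeaf (φ : T →g G) {v : α} {y : V} (h : G.Adj (φ v) y) :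
    (φ.addLeaf h).edgeSpan = insert s(φ v, y) φ.edgeSpan := by
  rw [edgeSpan, edgeSet_addLeaf, Set.image_insert_eq, Set.image_image]
  simp only [Sym2.map_map]
  rfl

lemma Subgraph.Connected.exists_adj_notMem {H : G.Subgraph} (hH : H.Connected) {C : Set V}
    (hC : (C ∩ H.verts).Nonempty) {S : Set (Sym2 V)} (hS : S ⊆ C.sym2)
    (hHS : ¬H.edgeSet ⊆ S) : ∃ x ∈ C, ∃ y, H.Adj x y ∧ s(x, y) ∉ S := by
  obtain ⟨e, heH, heS⟩ := Set.not_subset.mp hHS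
  induction e using Sym2.ind with
  | _ a b =>
    have hab : H.Adj a b := heH
    by_cases ha : a ∈ C
    · exact ⟨a, ha, b, hab, heS⟩
    obtain ⟨r, hrC, hrH⟩ := hC
    obtain ⟨p⟩ := hH.preconnected ⟨r, hrH⟩ ⟨a, H.edge_vert hab⟩
    obtain ⟨d, -, hd₁, hd₂⟩ := p.exists_boundary_dart (Subtype.val ⁻¹' C) hrC ha
    exact ⟨d.fst, hd₁, d.snd, d.adj, fun hdS => hd₂ (Set.mk_mem_sym2_iff.mp (hS hdS)).2⟩

theorem Subgraph.Connected.exists_isTree_edgeSpan_ncard_eq {H : G.Subgraph} (hH : H.Connected)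
    (hfin : H.edgeSet.Finite) {k : ℕ} (hk : k ≤ H.edgeSet.ncard) :
    ∃ (α : Type) (_ : Fintype α) (T : SimpleGraph α) (_ : T.IsTree) (φ : T →g G),
      φ.edgeSpan ⊆ H.edgeSet ∧ φ.edgeSpan.ncard = k ∧ Fintype.card α = k + 1 ∧
        (Set.range φ ∩ H.verts).Nonempty := by
  induction k with
  | zero =>
    obtain ⟨r, hr⟩ := hH.nonempty
    let φ : (⊥ : SimpleGraph Unit) →g G := ⟨fun _ => r, nofun⟩
    have hspan : φ.edgeSpan = ∅ := by simp [Hom.edgeSpan]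
    exact ⟨Unit, inferInstance, ⊥, .of_subsingleton, φ, hspan ▸ Set.empty_subset _,
      by rw [hspan, Set.ncard_empty], rfl, r, ⟨(), rfl⟩, hr⟩
  | succ k ih =>
    obtain ⟨α, _, T, hT, φ, hsub, hcard, hα, hrange⟩ := ih (by omega)
    have hHS : ¬H.edgeSet ⊆ φ.edgeSpan := fun h =>
      (Set.ncard_le_ncard h (hfin.subset hsub)).not_gt (by omega)
    obtain ⟨_, ⟨v, rfl⟩, y, hvy, hnew⟩ :=
      hH.exists_adj_notMem hrange φ.edgeSpan_subset_sym2_range hHS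
    refine ⟨Option α, inferInstance, T.addLeaf v, hT.addLeaf v, φ.addLeaf (H.adj_sub hvy),
      ?_, ?_, ?_, ?_⟩
    · rw [Hom.edgeSpan_addLeaf]
      exact Set.insert_subset hvy hsub
    · rw [Hom.edgeSpan_addLeaf, Set.ncard_insert_of_notMem hnew (hfin.subset hsub), hcard]
    · rw [Fintype.card_option, hα]
    · obtain ⟨_, ⟨t, rfl⟩, ht⟩ := hrange
      exact ⟨φ t, ⟨some t, rfl⟩, ht⟩

end SimpleGraph

theorem branching_walk_edge_span_connected_subgraph_general
    {V : Type} [Fintype V]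
    (G : SimpleGraph V) (H : G.Subgraph) (hH : H.Connected) :
    (∀ (α : Type) (inst : Fintype α) (T : SimpleGraph α), T.IsTree →
      ∀ φ : T →g G, (Sym2.map φ) '' T.edgeSet = H.edgeSet →
        H.edgeSet.ncard + 1 ≤ @Fintype.card α inst) ∧
    (∃ (α : Type) (inst : Fintype α) (T : SimpleGraph α) (_ : T.IsTree)
        (φ : T →g G), (Sym2.map φ) '' T.edgeSet = H.edgeSet ∧
          @Fintype.card α inst = H.edgeSet.ncard + 1) := by
  refine ⟨fun α _ T hT φ hspan => ?_, ?_⟩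
  · rw [← hspan, ← Nat.card_eq_fintype_card]
    exact hT.ncard_edgeSpan_add_one_le φ
  · obtain ⟨α, inst, T, hT, φ, hsub, hcard, hα, -⟩ :=
      hH.exists_isTree_edgeSpan_ncard_eq (Set.toFinite _) le_rfl
    exact ⟨α, inst, T, hT, φ, Set.eq_of_subset_of_ncard_le hsub hcard.ge, hα⟩

theorem branching_walk_edge_span_connected_subgraph
    {V : Type} [Fintype V] [DecidableEq V]
    (G : SimpleGraph V) (H : G.Subgraph) (hH : H.Connected) :
    (∀ (α : Type) (inst : Fintype α) (T : SimpleGraph α), T.IsTree →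
      ∀ φ : T →g G, (Sym2.map φ) '' T.edgeSet = H.edgeSet →
        H.edgeSet.ncard + 1 ≤ @Fintype.card α inst) ∧
    (∃ (α : Type) (inst : Fintype α) (T : SimpleGraph α) (_ : T.IsTree)
        (φ : T →g G), (Sym2.map φ) '' T.edgeSet = H.edgeSet ∧
          @Fintype.card α inst = H.edgeSet.ncard + 1) :=
  branching_walk_edge_span_connected_subgraph_general G H hH
end

section
/- Let C and Q be finite multisets of colours with |C| = k, and let C_0 = C ∩ Q be their multiset intersection. Let k_s, k_d, k_i be nonnegative integers (bounds on substitutions, deletions, insertions) and a = min(|C| − |C_0|, |Q| − |C_0|, k_s). Then C can be transformed into Q using at most k_s substitutions, at most k_d deletions, and at most k_i insertions if and only if |C_0| + a ≥ max(|Q| − k_i, k − k_d). -/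
/-- `C` can be transformed into `Q` using at most `ks` substitutions, `kd`
deletions and `ki` insertions: there is a common kept part `R` (a sub-multiset
of both `C` and `Q`); the remaining `s + d` elements of `C` are removed by `s`
substitutions and `d` deletions, and the remaining `s + i` elements of `Q` are
produced by the `s` substitutions and `i` insertions. -/
def CanTransform {α : Type} (C Q : Multiset α) (ks kd ki : ℕ) : Prop :=
  ∃ (s d i : ℕ) (R : Multiset α), s ≤ ks ∧ d ≤ kd ∧ i ≤ ki ∧
    R ≤ C ∧ R ≤ Q ∧
    Multiset.card C = Multiset.card R + s + d ∧
    Multiset.card Q = Multiset.card R + s + i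

/-! Since the common sub-multisets of `C` and `Q` are exactly the sub-multisets of `C ∩ Q`,
the kept part can have any size up to `|C ∩ Q|`, and the question becomes one about natural
numbers. There it is optimal to keep all of `C ∩ Q` and to use as many substitutions as
possible, namely `min (|C| - |C ∩ Q|) (|Q| - |C ∩ Q|) ks`, each of which saves both a deletion
and an insertion. -/

open Multiset

theorem Multiset.exists_le_card_eq {α : Type*} {s : Multiset α} {n : ℕ} (h : n ≤ card s) :
    ∃ t ≤ s, card t = n := by
  have hne : powersetCard n s ≠ 0 := by
    rw [← card_pos, card_powersetCard]
    exact Nat.choose_pos h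
  obtain ⟨t, ht⟩ := exists_mem_of_ne_zero hne
  exact ⟨t, mem_powersetCard.1 ht⟩

theorem canTransform_iff_exists_card {α : Type} [DecidableEq α] (C Q : Multiset α)
    (ks kd ki : ℕ) :
    CanTransform C Q ks kd ki ↔
      ∃ r s d i : ℕ, r ≤ card (C ∩ Q) ∧ s ≤ ks ∧ d ≤ kd ∧ i ≤ ki ∧
        card C = r + s + d ∧ card Q = r + s + i := by
  constructor
  · rintro ⟨s, d, i, R, hs, hd, hi, hRC, hRQ, hC, hQ⟩
    exact ⟨card R, s, d, i, card_le_card (le_inter hRC hRQ), hs, hd, hi, hC, hQ⟩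
  · rintro ⟨r, s, d, i, hr, hs, hd, hi, hC, hQ⟩
    obtain ⟨R, hR, rfl⟩ := exists_le_card_eq hr
    exact ⟨s, d, i, R, hs, hd, hi, hR.trans inter_le_left, hR.trans inter_le_right, hC, hQ⟩

theorem Nat.exists_edit_split_iff {c q m ks kd ki : ℕ} (hmc : m ≤ c) (hmq : m ≤ q) :
    (∃ r s d i : ℕ, r ≤ m ∧ s ≤ ks ∧ d ≤ kd ∧ i ≤ ki ∧ c = r + s + d ∧ q = r + s + i) ↔
      max (q - ki) (c - kd) ≤ m + min (min (c - m) (q - m)) ks := by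
  constructor
  · rintro ⟨r, s, d, i, hr, hs, hd, hi, hc, hq⟩
    omega
  · intro h
    set a := min (min (c - m) (q - m)) ks
    exact ⟨m, a, c - (m + a), q - (m + a), le_rfl, by omega, by omega, by omega, by omega,
      by omega⟩

theorem canTransform_iff {α : Type} [DecidableEq α]
    (C Q : Multiset α) (k ks kd ki : ℕ) (hk : Multiset.card C = k) :
    CanTransform C Q ks kd ki ↔
      max (Multiset.card Q - ki) (k - kd) ≤
        Multiset.card (C ∩ Q) +
          min (min (Multiset.card C - Multiset.card (C ∩ Q))
                (Multiset.card Q - Multiset.card (C ∩ Q))) ks := by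
  subst hk
  rw [canTransform_iff_exists_card]
  exact Nat.exists_edit_split_iff (card_le_card inter_le_left) (card_le_card inter_le_right)
end
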